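/- arXiv:2103.06204 — 2 statements merged into one kernel-verified Lean document; each statement's English description precedes it below -/
import Mathlib

section
/- Let a < b be real numbers, let ℓ : ℝ → ℝ be an affine function with ℓ(a) = τ_1 and ℓ(b) = −τ_0, and let κ : [a,b] → ℝ be measurable with 0 < m ≤ κ(x) ≤ M for all x ∈ [a,b]. Then ((b−a)/(6 M²)) (τ_0² + τ_1²) ≤ ∫_a^b (ℓ(x)/κ(x))² dx ≤ (2(b−a)/(3 m²)) (τ_0² + τ_1²). -/
/-!
Since `m ≤ κ ≤ M` on `[a, b]`, the integrand `(ℓ/κ)²` is squeezed between `ℓ²/M²` and `ℓ²/m²`,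
so it suffices to bound `∫ ℓ²`. For affine `ℓ` this integral is exactly
`(b - a)/3 · (ℓ(a)² + ℓ(a)ℓ(b) + ℓ(b)²)`, and the form `u² + uv + v²` lies between
`(u² + v²)/2` and `2(u² + v²)`.
-/

open MeasureTheory intervalIntegral Set

theorem integral_affine_sq (a b c d : ℝ) :
    ∫ x in a..b, (c * x + d) ^ 2 =
      (b - a) / 3 * ((c * a + d) ^ 2 + (c * a + d) * (c * b + d) + (c * b + d) ^ 2) := by
  have hderiv : ∀ x ∈ uIcc a b, HasDerivAt
      (fun x => c ^ 2 * x ^ 3 / 3 + c * d * x ^ 2 + d ^ 2 * x) ((c * x + d) ^ 2) x := by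
    intro x _
    refine ((((hasDerivAt_pow 3 x).const_mul (c ^ 2)).div_const 3).add
      ((hasDerivAt_pow 2 x).const_mul (c * d)) |>.add
        ((hasDerivAt_id x).const_mul (d ^ 2))).congr_deriv ?_
    norm_num
    ring
  rw [integral_eq_sub_of_hasDerivAt hderiv ((by fun_prop : Continuous _).intervalIntegrable _ _)]
  ring

theorem sq_div_le_sq_div_sq {y k m : ℝ} (hm : 0 < m) (hk : m ≤ k) :
    (y / k) ^ 2 ≤ y ^ 2 / m ^ 2 := by
  rw [div_pow]
  gcongr

theorem sq_div_sq_le_sq_div {y k M : ℝ} (hk : 0 < k) (hM : k ≤ M) :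
    y ^ 2 / M ^ 2 ≤ (y / k) ^ 2 := by
  rw [div_pow]
  gcongr

section WeightedSquare

variable {f κ : ℝ → ℝ} {a b m M : ℝ}

theorem intervalIntegrable_sq_div (hf : Measurable f) (hκ : Measurable κ)
    (hf2 : IntervalIntegrable (fun x => f x ^ 2) volume a b) (hm : 0 < m) (hab : a ≤ b)
    (hκm : ∀ x ∈ Icc a b, m ≤ κ x) :
    IntervalIntegrable (fun x => (f x / κ x) ^ 2) volume a b := by
  refine (hf2.div_const (m ^ 2)).mono_fun ((hf.div hκ).pow_const 2).aestronglyMeasurable ?_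
  rw [uIoc_of_le hab]
  filter_upwards [ae_restrict_mem measurableSet_Ioc] with x hx
  have hle := sq_div_le_sq_div_sq (y := f x) hm (hκm x (Ioc_subset_Icc_self hx))
  rw [Real.norm_of_nonneg (sq_nonneg _), Real.norm_of_nonneg ((sq_nonneg _).trans hle)]
  exact hle

theorem integral_sq_div_le (hf2 : IntervalIntegrable (fun x => f x ^ 2) volume a b)
    (hint : IntervalIntegrable (fun x => (f x / κ x) ^ 2) volume a b) (hm : 0 < m)
    (hab : a ≤ b) (hκm : ∀ x ∈ Icc a b, m ≤ κ x) :
    ∫ x in a..b, (f x / κ x) ^ 2 ≤ (∫ x in a..b, f x ^ 2) / m ^ 2 := by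
  rw [← intervalIntegral.integral_div]
  exact integral_mono_on hab hint (hf2.div_const _)
    fun x hx => sq_div_le_sq_div_sq hm (hκm x hx)

theorem div_sq_le_integral_sq_div (hf2 : IntervalIntegrable (fun x => f x ^ 2) volume a b)
    (hint : IntervalIntegrable (fun x => (f x / κ x) ^ 2) volume a b) (hab : a ≤ b)
    (hκM : ∀ x ∈ Icc a b, 0 < κ x ∧ κ x ≤ M) :
    (∫ x in a..b, f x ^ 2) / M ^ 2 ≤ ∫ x in a..b, (f x / κ x) ^ 2 := by
  rw [← intervalIntegral.integral_div]
  exact integral_mono_on hab (hf2.div_const _) hint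
    fun x hx => sq_div_sq_le_sq_div (hκM x hx).1 (hκM x hx).2

end WeightedSquare

/-- For an affine function `ℓ` with `ℓ a = τ₁`, `ℓ b = −τ₀`, and a
measurable `κ` with `0 < m ≤ κ ≤ M` on `[a,b]`, the integral `∫_a^b (ℓ/κ)²` is bounded
below by `((b−a)/(6M²))(τ₀² + τ₁²)` and above by `(2(b−a)/(3m²))(τ₀² + τ₁²)`. -/
theorem stmt4 (a b c d m M τ0 τ1 : ℝ) (hab : a < b) (ℓ κ : ℝ → ℝ)
    (hℓ : ∀ x : ℝ, ℓ x = c * x + d) (hℓa : ℓ a = τ1) (hℓb : ℓ b = -τ0)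
    (hκmeas : Measurable κ) (hm : 0 < m)
    (hκ : ∀ x ∈ Set.Icc a b, m ≤ κ x ∧ κ x ≤ M) :
    (b - a) / (6 * M ^ 2) * (τ0 ^ 2 + τ1 ^ 2) ≤ (∫ x in a..b, (ℓ x / κ x) ^ 2) ∧
    (∫ x in a..b, (ℓ x / κ x) ^ 2) ≤ 2 * (b - a) / (3 * m ^ 2) * (τ0 ^ 2 + τ1 ^ 2) := by
  have hℓcont : Continuous ℓ := by
    rw [show ℓ = fun x => c * x + d from funext hℓ]
    fun_prop
  have hℓ2 : IntervalIntegrable (fun x => ℓ x ^ 2) volume a b :=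
    (hℓcont.pow 2).intervalIntegrable a b
  have hint := intervalIntegrable_sq_div hℓcont.measurable hκmeas hℓ2 hm hab.le
    fun x hx => (hκ x hx).1
  have hI : ∫ x in a..b, ℓ x ^ 2 = (b - a) / 3 * (τ1 ^ 2 - τ1 * τ0 + τ0 ^ 2) := by
    simp_rw [hℓ]
    rw [integral_affine_sq, ← hℓ, ← hℓ, hℓa, hℓb]
    ring
  constructor
  · calc (b - a) / (6 * M ^ 2) * (τ0 ^ 2 + τ1 ^ 2)
        = (b - a) / 3 * ((τ0 ^ 2 + τ1 ^ 2) / 2) / M ^ 2 := by ring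
      _ ≤ (∫ x in a..b, ℓ x ^ 2) / M ^ 2 := by
        rw [hI]
        gcongr (b - a) / 3 * ?_ / _
        nlinarith [sq_nonneg (τ1 - τ0)]
      _ ≤ ∫ x in a..b, (ℓ x / κ x) ^ 2 := div_sq_le_integral_sq_div hℓ2 hint hab.le
        fun x hx => ⟨hm.trans_le (hκ x hx).1, (hκ x hx).2⟩
  · calc ∫ x in a..b, (ℓ x / κ x) ^ 2
        ≤ (∫ x in a..b, ℓ x ^ 2) / m ^ 2 :=
          integral_sq_div_le hℓ2 hint hm hab.le fun x hx => (hκ x hx).1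
      _ ≤ 2 * (b - a) / (3 * m ^ 2) * (τ0 ^ 2 + τ1 ^ 2) := by
        rw [hI, show 2 * (b - a) / (3 * m ^ 2) * (τ0 ^ 2 + τ1 ^ 2)
          = (b - a) / 3 * (2 * (τ0 ^ 2 + τ1 ^ 2)) / m ^ 2 by ring]
        gcongr (b - a) / 3 * ?_ / _
        nlinarith [sq_nonneg (τ1 + τ0)]
end

section
/- Let a < b, r, r' > 0, and let u : ℝ → ℝ be continuous with u affine of slope s₋ on [a−r, a], affine of slope s on [a, b], and affine of slope s₊ on [b, b+r']. Let δ_a, δ_b ∈ ℝ be such that ã := a + δ_a ∈ (a−r, b), b̃ := b + δ_b ∈ (a, b+r'), and ã < b̃. Set s̃ = (u(b̃) − u(ã))/(b̃ − ã), ξ = δ_a (s₋ − s) + δ_b (s − s₊), and S = ∫_{(a,b) ∩ (ã,b̃)} (s̃ − s)² dx + ∫_{(a−r,a) ∩ (ã,b̃)} (s̃ − s₋)² dx + ∫_{(b,b+r') ∩ (ã,b̃)} (s̃ − s₊)² dx. Then: (i) if δ_a ≥ 0 and δ_b ≥ 0, S = δ_b (s − s₊)² − (δ_b²/(b̃ −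 ã)) (s − s₊)²; (ii) if δ_a ≤ 0 and δ_b ≤ 0, S = −δ_a (s₋ − s)² − (δ_a²/(b̃ − ã)) (s₋ − s)²; (iii) if δ_a ≤ 0 and δ_b ≥ 0, S = δ_b (s − s₊)² − δ_a (s₋ − s)² − ξ²/(b̃ − ã); (iv) if δ_a ≥ 0 and δ_b ≤ 0, S = 0. -/
open MeasureTheory

/-- Secant slope of `u` between `A` and `B`. -/
noncomputable def sec (u : ℝ → ℝ) (A B : ℝ) : ℝ := (u B - u A) / (B - A)

/-- Total squared L² norm over the perturbed element `(ã, b̃)` of the difference between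
the derivative of `u` (with slopes `s₋, s, s₊` on the three elements) and the constant
secant slope `s̃`. -/
noncomputable def Stot (a b r r' δa δb sm s sp : ℝ) (u : ℝ → ℝ) : ℝ :=
  (∫ t in Set.Ioo a b ∩ Set.Ioo (a + δa) (b + δb),
    (sec u (a + δa) (b + δb) - s) ^ 2) +
  (∫ t in Set.Ioo (a - r) a ∩ Set.Ioo (a + δa) (b + δb),
    (sec u (a + δa) (b + δb) - sm) ^ 2) +
  (∫ t in Set.Ioo b (b + r') ∩ Set.Ioo (a + δa) (b + δb),
    (sec u (a + δa) (b + δb) - sp) ^ 2)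

/-!
The perturbed element `(ã, b̃)` meets the three elements in intervals of lengths
`L = (a - ã)⁺`, `M` and `R = (b̃ - b)⁺` with `L + M + R = b̃ - ã`, and `u(b̃) - u(ã) = s₋ L + s M + s₊ R`.
So `s̃` is the `(L, M, R)`-weighted mean of the slopes, `S` is their weighted variance, and the
variance computed about `s` is `L (s₋ - s)² + R (s₊ - s)² - (L (s₋ - s) + R (s₊ - s))² / (b̃ - ã)`.
Each sign pattern of `δ_a, δ_b` just decides which of `L, R` vanish.
-/

lemma setIntegral_const_Ioo_inter_Ioo (c x y p q : ℝ) :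
    (∫ _ in Set.Ioo x y ∩ Set.Ioo p q, c) = max (min y q - max x p) 0 * c := by
  rw [Set.Ioo_inter_Ioo, setIntegral_const, measureReal_def, Real.volume_Ioo,
    ENNReal.toReal_ofReal', smul_eq_mul]

lemma weighted_sq_dev_mean_eq (L M R p c q W : ℝ) (hW : L + M + R = W) (hW0 : W ≠ 0) :
    M * ((p * L + c * M + q * R) / W - c) ^ 2 + L * ((p * L + c * M + q * R) / W - p) ^ 2 +
        R * ((p * L + c * M + q * R) / W - q) ^ 2 =
      L * (p - c) ^ 2 + R * (q - c) ^ 2 - (L * (p - c) + R * (q - c)) ^ 2 / W := by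
  subst hW
  field_simp
  ring

section PiecewiseAffine

variable {a b r r' sm s sp : ℝ} {u : ℝ → ℝ}

lemma eq_at_left_node (haffm : ∀ t ∈ Set.Icc (a - r) a, u t = u a + sm * (t - a))
    (haff : ∀ t ∈ Set.Icc a b, u t = u a + s * (t - a)) {x : ℝ} (hx₁ : a - r ≤ x) (hx₂ : x ≤ b) :
    u x = u a + s * (max x a - a) - sm * max (a - x) 0 := by
  rcases le_total x a with hxa | hax
  · rw [haffm x ⟨hx₁, hxa⟩, max_eq_right hxa, max_eq_left (by linarith)]
    ring
  · rw [haff x ⟨hax, hx₂⟩, max_eq_left hax, max_eq_right (by linarith), mul_zero, sub_zero]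

lemma eq_at_right_node (hab : a ≤ b) (haff : ∀ t ∈ Set.Icc a b, u t = u a + s * (t - a))
    (haffp : ∀ t ∈ Set.Icc b (b + r'), u t = u b + sp * (t - b)) {y : ℝ} (hy₁ : a ≤ y)
    (hy₂ : y ≤ b + r') :
    u y = u a + s * (min y b - a) + sp * max (y - b) 0 := by
  rcases le_total y b with hyb | hby
  · rw [haff y ⟨hy₁, hyb⟩, min_eq_left hyb, max_eq_right (by linarith), mul_zero, add_zero]
  · rw [haffp y ⟨hby, hy₂⟩, haff b ⟨hab, le_rfl⟩, min_eq_right hby, max_eq_left (by linarith)]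

lemma sum_setIntegral_sq_sub_sec (hab : a < b)
    (haffm : ∀ t ∈ Set.Icc (a - r) a, u t = u a + sm * (t - a))
    (haff : ∀ t ∈ Set.Icc a b, u t = u a + s * (t - a))
    (haffp : ∀ t ∈ Set.Icc b (b + r'), u t = u b + sp * (t - b)) {x y : ℝ}
    (hx₁ : a - r < x) (hx₂ : x < b) (hy₁ : a < y) (hy₂ : y < b + r') (hxy : x < y) :
    (∫ _ in Set.Ioo a b ∩ Set.Ioo x y, (sec u x y - s) ^ 2) +
        (∫ _ in Set.Ioo (a - r) a ∩ Set.Ioo x y, (sec u x y - sm) ^ 2) +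
        (∫ _ in Set.Ioo b (b + r') ∩ Set.Ioo x y, (sec u x y - sp) ^ 2) =
      max (a - x) 0 * (sm - s) ^ 2 + max (y - b) 0 * (sp - s) ^ 2 -
        (max (a - x) 0 * (sm - s) + max (y - b) 0 * (sp - s)) ^ 2 / (y - x) := by
  set L := max (a - x) 0
  set R := max (y - b) 0
  set M := min y b - max x a
  have hM : max (min b y - max a x) 0 = M := by
    rw [min_comm, max_comm a]
    exact max_eq_left (sub_nonneg.2 (max_le (le_min hxy.le hx₂.le) (le_min hy₁.le hab.le)))
  have hL : max (min a y - max (a - r) x) 0 = L := by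
    rw [min_eq_left hy₁.le, max_eq_right hx₁.le]
  have hR : max (min (b + r') y - max b x) 0 = R := by
    rw [min_eq_right hy₂.le, max_eq_left hx₂.le]
  have hlen : L + M + R = y - x := by
    rcases le_total x a with hxa | hax <;> rcases le_total y b with hyb | hby <;>
      simp only [L, R, M, max_eq_left, max_eq_right, min_eq_left, min_eq_right, sub_nonneg,
        sub_nonpos, *] <;> ring
  have hsec : sec u x y = (sm * L + s * M + sp * R) / (y - x) := by
    rw [sec, eq_at_left_node haffm haff hx₁.le hx₂.le,
      eq_at_right_node hab.le haff haffp hy₁.le hy₂.le]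
    congr 1
    ring
  rw [setIntegral_const_Ioo_inter_Ioo, setIntegral_const_Ioo_inter_Ioo,
    setIntegral_const_Ioo_inter_Ioo, hM, hL, hR, hsec]
  exact weighted_sq_dev_mean_eq L M R sm s sp (y - x) hlen (sub_ne_zero.2 hxy.ne')

end PiecewiseAffine

theorem stmt11_general (a b r r' δa δb sm s sp : ℝ) (u : ℝ → ℝ)
    (hab : a < b)
    (haffm : ∀ t ∈ Set.Icc (a - r) a, u t = u a + sm * (t - a))
    (haff : ∀ t ∈ Set.Icc a b, u t = u a + s * (t - a))
    (haffp : ∀ t ∈ Set.Icc b (b + r'), u t = u b + sp * (t - b))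
    (hta1 : a - r < a + δa) (hta2 : a + δa < b)
    (htb1 : a < b + δb) (htb2 : b + δb < b + r')
    (hlt : a + δa < b + δb) :
    (0 ≤ δa → 0 ≤ δb →
      Stot a b r r' δa δb sm s sp u =
        δb * (s - sp) ^ 2 - δb ^ 2 / (b + δb - (a + δa)) * (s - sp) ^ 2) ∧
    (δa ≤ 0 → δb ≤ 0 →
      Stot a b r r' δa δb sm s sp u =
        -δa * (sm - s) ^ 2 - δa ^ 2 / (b + δb - (a + δa)) * (sm - s) ^ 2) ∧
    (δa ≤ 0 → 0 ≤ δb →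
      Stot a b r r' δa δb sm s sp u =
        δb * (s - sp) ^ 2 - δa * (sm - s) ^ 2 -
          (δa * (sm - s) + δb * (s - sp)) ^ 2 / (b + δb - (a + δa))) ∧
    (0 ≤ δa → δb ≤ 0 → Stot a b r r' δa δb sm s sp u = 0) := by
  have hS := sum_setIntegral_sq_sub_sec hab haffm haff haffp hta1 hta2 htb1 htb2 hlt
  rw [← Stot] at hS
  refine ⟨fun ha hb => ?_, fun ha hb => ?_, fun ha hb => ?_, fun ha hb => ?_⟩
  · rw [hS, max_eq_right (by linarith), max_eq_left (by linarith)]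
    ring
  · rw [hS, max_eq_left (by linarith), max_eq_right (by linarith)]
    ring
  · rw [hS, max_eq_left (by linarith), max_eq_left (by linarith)]
    ring
  · rw [hS, max_eq_right (by linarith), max_eq_right (by linarith)]
    ring

/-- Case-by-case value of the total contribution `S`, with
`ξ = δ_a(s₋ − s) + δ_b(s − s₊)`. -/
theorem stmt11 (a b r r' δa δb sm s sp : ℝ) (u : ℝ → ℝ)
    (hr : 0 < r) (hr' : 0 < r') (hab : a < b) (hu : Continuous u)
    (haffm : ∀ t ∈ Set.Icc (a - r) a, u t = u a + sm * (t - a))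
    (haff : ∀ t ∈ Set.Icc a b, u t = u a + s * (t - a))
    (haffp : ∀ t ∈ Set.Icc b (b + r'), u t = u b + sp * (t - b))
    (hta1 : a - r < a + δa) (hta2 : a + δa < b)
    (htb1 : a < b + δb) (htb2 : b + δb < b + r')
    (hlt : a + δa < b + δb) :
    (0 ≤ δa → 0 ≤ δb →
      Stot a b r r' δa δb sm s sp u =
        δb * (s - sp) ^ 2 - δb ^ 2 / (b + δb - (a + δa)) * (s - sp) ^ 2) ∧
    (δa ≤ 0 → δb ≤ 0 →
      Stot a b r r' δa δb sm s sp u =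
        -δa * (sm - s) ^ 2 - δa ^ 2 / (b + δb - (a + δa)) * (sm - s) ^ 2) ∧
    (δa ≤ 0 → 0 ≤ δb →
      Stot a b r r' δa δb sm s sp u =
        δb * (s - sp) ^ 2 - δa * (sm - s) ^ 2 -
          (δa * (sm - s) + δb * (s - sp)) ^ 2 / (b + δb - (a + δa))) ∧
    (0 ≤ δa → δb ≤ 0 → Stot a b r r' δa δb sm s sp u = 0) :=
  stmt11_general a b r r' δa δb sm s sp u hab haffm haff haffp hta1 hta2 htb1 htb2 hlt
end
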